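/- arXiv:1603.00401 — 5 statements merged into one kernel-verified Lean document; each statement's English description precedes it below -/
import Mathlib

section
/- If p and q are primes, s and t are positive integers, and J₂(p^s) = J₂(q^t), then p^s = q^t or {p^s, q^t} = {7, 8}. -/
/-!
Since `J₂(p ^ (k + 1)) = p ^ (2k) (p² - 1)`, suppose `p < q` and
`p ^ (2k) (p² - 1) = q ^ (2l) (q² - 1)`. Coprimality gives `q ^ (2l) ∣ p² - 1 < q²`, so `l = 0`
and `p ^ (2k) ∣ (q - 1)(q + 1)`. A prime power dividing `ab` is at most `gcd(a, b) · max(a, b)`,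
and `gcd(q - 1, q + 1) ≤ 2`, so `p ^ (2k) ≤ 2(q + 1)`; comparing with the equation gives
`q ≤ 2p² - 1` and hence `p ^ (2k - 2) ≤ 4`. Either `k = 1`, and `q² = p⁴ - p² + 1` lies strictly
between two consecutive squares, or `p = 2`, `k = 2` and `q² = 49`.
-/

noncomputable def J (k n : ℕ) : ℚ :=
  (n : ℚ) ^ k * ∏ p ∈ n.primeFactors, (1 - 1 / (p : ℚ) ^ k)

noncomputable def I (n : ℕ) : ℚ := if n = 2 then 2 else 1

noncomputable def D (n : ℕ) : ℚ := J 2 n * I n / 2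

theorem J_two_prime_pow_succ {p : ℕ} (hp : p.Prime) (k : ℕ) :
    J 2 (p ^ (k + 1)) = ((p ^ (2 * k) * (p ^ 2 - 1) : ℕ) : ℚ) := by
  have hp0 : (p : ℚ) ≠ 0 := Nat.cast_ne_zero.mpr hp.ne_zero
  rw [J, Nat.primeFactors_prime_pow k.succ_ne_zero hp, Finset.prod_singleton,
    Nat.cast_mul, Nat.cast_sub (Nat.one_le_pow _ _ hp.pos)]
  push_cast
  field_simp
  ring

theorem Nat.Prime.pow_le_gcd_mul_max_of_pow_dvd_mul {p n a b : ℕ} (hp : p.Prime)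
    (ha : 0 < a) (hb : 0 < b) (h : p ^ n ∣ a * b) : p ^ n ≤ Nat.gcd a b * max a b := by
  obtain ⟨d, e, hda, heb, hde⟩ := Nat.dvd_mul.1 h
  obtain ⟨i, -, rfl⟩ := (Nat.dvd_prime_pow hp).1 (Dvd.intro e hde)
  obtain ⟨j, -, rfl⟩ := (Nat.dvd_prime_pow hp).1 (Dvd.intro_left _ hde)
  rw [← hde]
  -- The smaller of the two prime powers divides the larger, hence both `a` and `b`.
  rcases le_total i j with hij | hji
  · have hi : p ^ i ∣ b := (Nat.pow_dvd_pow p hij).trans heb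
    exact Nat.mul_le_mul (Nat.le_of_dvd (Nat.gcd_pos_of_pos_left b ha) (Nat.dvd_gcd hda hi))
      ((Nat.le_of_dvd hb heb).trans (le_max_right a b))
  · have hj : p ^ j ∣ a := (Nat.pow_dvd_pow p hji).trans hda
    rw [mul_comm]
    exact Nat.mul_le_mul (Nat.le_of_dvd (Nat.gcd_pos_of_pos_left b ha) (Nat.dvd_gcd hj heb))
      ((Nat.le_of_dvd ha hda).trans (le_max_left a b))

theorem Nat.sq_sub_one_eq (q : ℕ) : q ^ 2 - 1 = (q - 1) * (q + 1) := by
  simpa [mul_comm] using Nat.sq_sub_sq q 1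

theorem Nat.Prime.pow_le_of_pow_dvd_sq_sub_one {p n q : ℕ} (hp : p.Prime) (hq : 2 ≤ q)
    (h : p ^ n ∣ q ^ 2 - 1) : p ^ n ≤ 2 * (q + 1) := by
  rw [Nat.sq_sub_one_eq] at h
  have hgcd : Nat.gcd (q - 1) (q + 1) ≤ 2 := by
    have := Nat.dvd_sub (Nat.gcd_dvd_right (q - 1) (q + 1)) (Nat.gcd_dvd_left (q - 1) (q + 1))
    rw [show q + 1 - (q - 1) = 2 by omega] at this
    exact Nat.le_of_dvd two_pos this
  calc p ^ n ≤ Nat.gcd (q - 1) (q + 1) * max (q - 1) (q + 1) :=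
        hp.pow_le_gcd_mul_max_of_pow_dvd_mul (by omega) (by omega) h
    _ ≤ 2 * (q + 1) := Nat.mul_le_mul hgcd (max_le (by omega) le_rfl)

theorem eq_zero_of_pow_mul_sq_sub_one_eq {p q k l : ℕ} (hp : p.Prime) (hq : q.Prime)
    (hpq : p < q) (h : p ^ (2 * k) * (p ^ 2 - 1) = q ^ (2 * l) * (q ^ 2 - 1)) : l = 0 := by
  have hcop : Nat.Coprime (q ^ (2 * l)) (p ^ (2 * k)) :=
    Nat.Coprime.pow _ _ ((Nat.coprime_primes hq hp).2 hpq.ne')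
  have hdvd : q ^ (2 * l) ∣ p ^ 2 - 1 := hcop.dvd_of_dvd_mul_left (Dvd.intro _ h.symm)
  have hlt : q ^ (2 * l) < q ^ 2 :=
    calc q ^ (2 * l) ≤ p ^ 2 - 1 :=
          Nat.le_of_dvd (Nat.sub_pos_of_lt (Nat.one_lt_pow two_ne_zero hp.one_lt)) hdvd
      _ < q ^ 2 := by have := Nat.pow_lt_pow_left hpq two_ne_zero; omega
  have := (Nat.pow_lt_pow_iff_right hq.one_lt).1 hlt
  omega

-- `q ^ 2 = P ^ 2 - P + 1` lies strictly between `(P - 1) ^ 2` and `P ^ 2`.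
theorem Nat.mul_pred_ne_sq_sub_one {P : ℕ} (hP : 2 ≤ P) (q : ℕ) : P * (P - 1) ≠ q ^ 2 - 1 := by
  intro h
  have hq2 : q ^ 2 = P * (P - 1) + 1 := by
    have : 1 ≤ P * (P - 1) := Nat.mul_pos (by omega) (by omega)
    omega
  have h1 : (P - 1) ^ 2 < q ^ 2 := by
    zify [show 1 ≤ P by omega] at hq2 ⊢; nlinarith
  have h2 : q ^ 2 < P ^ 2 := by
    zify [show 1 ≤ P by omega] at hq2 ⊢; nlinarith
  have := (Nat.pow_lt_pow_iff_left two_ne_zero).1 h1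
  have := (Nat.pow_lt_pow_iff_left two_ne_zero).1 h2
  omega

theorem eq_two_two_seven_of_pow_mul_sq_sub_one_eq {p q k : ℕ} (hp : p.Prime) (hq : q.Prime)
    (hpq : p < q) (h : p ^ (2 * k) * (p ^ 2 - 1) = q ^ 2 - 1) : p = 2 ∧ k = 2 ∧ q = 7 := by
  have hp2 : 4 ≤ p ^ 2 := by nlinarith [hp.two_le]
  have hpq2 : p ^ 2 < q ^ 2 := Nat.pow_lt_pow_left hpq two_ne_zero
  have hk : k ≠ 0 := by rintro rfl; simp at h; omega
  have hbound : p ^ (2 * k) ≤ 2 * (q + 1) :=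
    hp.pow_le_of_pow_dvd_sq_sub_one hq.two_le (Dvd.intro _ h)
  have hq_le : q - 1 ≤ 2 * (p ^ 2 - 1) := by
    refine Nat.le_of_mul_le_mul_right ?_ (Nat.succ_pos q)
    calc (q - 1) * (q + 1) = p ^ (2 * k) * (p ^ 2 - 1) := by rw [h, Nat.sq_sub_one_eq]
      _ ≤ 2 * (q + 1) * (p ^ 2 - 1) := Nat.mul_le_mul_right _ hbound
      _ = 2 * (p ^ 2 - 1) * (q + 1) := by ring
  have hsplit : p ^ (2 * k) = p ^ 2 * p ^ (2 * (k - 1)) := by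
    rw [← pow_add]; congr 1; omega
  have hrest : p ^ (2 * (k - 1)) ≤ 4 :=
    Nat.le_of_mul_le_mul_left (by omega) (hp.pos.trans_le (Nat.le_self_pow two_ne_zero p))
  rcases Nat.lt_or_ge k 2 with hk1 | hk2
  · obtain rfl : k = 1 := by omega
    exact absurd (by simpa using h) (Nat.mul_pred_ne_sq_sub_one (P := p ^ 2) (by omega) q)
  · have hp_le : p ^ 2 ≤ p ^ (2 * (k - 1)) := Nat.pow_le_pow_right hp.pos (by omega)
    obtain rfl : p = 2 := by nlinarith [hp.two_le]
    obtain rfl : k = 2 := by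
      have := (Nat.pow_le_pow_iff_right (le_refl 2)).1 (hrest.trans_eq (by norm_num : 4 = 2 ^ 2))
      omega
    refine ⟨rfl, rfl, Nat.pow_left_injective two_ne_zero ?_⟩
    norm_num at h ⊢
    omega

theorem stmt6 (p q s t : ℕ) (hp : p.Prime) (hq : q.Prime)
    (hs : 1 ≤ s) (ht : 1 ≤ t) (h : J 2 (p ^ s) = J 2 (q ^ t)) :
    p ^ s = q ^ t ∨ (p ^ s = 7 ∧ q ^ t = 8) ∨ (p ^ s = 8 ∧ q ^ t = 7) := by
  obtain ⟨k, rfl⟩ := Nat.exists_eq_add_of_le' hs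
  obtain ⟨l, rfl⟩ := Nat.exists_eq_add_of_le' ht
  have key : p ^ (2 * k) * (p ^ 2 - 1) = q ^ (2 * l) * (q ^ 2 - 1) := by
    exact_mod_cast (J_two_prime_pow_succ hp k).symm.trans (h.trans (J_two_prime_pow_succ hq l))
  rcases lt_trichotomy p q with hpq | rfl | hqp
  · obtain rfl := eq_zero_of_pow_mul_sq_sub_one_eq hp hq hpq key
    obtain ⟨rfl, rfl, rfl⟩ :=
      eq_two_two_seven_of_pow_mul_sq_sub_one_eq hp hq hpq (by simpa using key)
    norm_num
  · have hpos : 0 < p ^ 2 - 1 := Nat.sub_pos_of_lt (Nat.one_lt_pow two_ne_zero hp.one_lt)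
    have := Nat.pow_right_injective hp.two_le (Nat.eq_of_mul_eq_mul_right hpos key)
    left; congr 1; omega
  · obtain rfl := eq_zero_of_pow_mul_sq_sub_one_eq hq hp hqp key.symm
    obtain ⟨rfl, rfl, rfl⟩ :=
      eq_two_two_seven_of_pow_mul_sq_sub_one_eq hq hp hqp (by simpa using key.symm)
    norm_num
end

section
/- If p₁ ≠ p₂ and q₁ ≠ q₂ are primes with J₂(p₁p₂) = J₂(q₁q₂) and J₄(p₁p₂) = J₄(q₁q₂), then p₁p₂ = q₁q₂. -/
/-! With `a = p₁², b = p₂², c = q₁², d = q₂²`, the hypotheses say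
`(a - 1)(b - 1) = (c - 1)(d - 1)` and `(a² - 1)(b² - 1) = (c² - 1)(d² - 1)`. Dividing the second
by the first (which is nonzero) gives `(a + 1)(b + 1) = (c + 1)(d + 1)`, and adding the two
degree-two identities gives `2ab + 2 = 2cd + 2`, i.e. `(p₁p₂)² = (q₁q₂)²`. -/

theorem J_mul_of_prime_of_ne (k : ℕ) {p q : ℕ} (hp : p.Prime) (hq : q.Prime) (hpq : p ≠ q) :
    J k (p * q) = ((p : ℚ) ^ k - 1) * ((q : ℚ) ^ k - 1) := by
  have hpf : (p * q).primeFactors = {p, q} := by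
    rw [Nat.primeFactors_mul hp.ne_zero hq.ne_zero, hp.primeFactors, hq.primeFactors]
    rfl
  have hp0 : (p : ℚ) ^ k ≠ 0 := pow_ne_zero k (Nat.cast_ne_zero.mpr hp.ne_zero)
  have hq0 : (q : ℚ) ^ k ≠ 0 := pow_ne_zero k (Nat.cast_ne_zero.mpr hq.ne_zero)
  rw [J, hpf, Finset.prod_pair hpq]
  push_cast
  field_simp
  ring

theorem Nat.Prime.cast_pow_sub_one_ne_zero {p : ℕ} (hp : p.Prime) {k : ℕ} (hk : k ≠ 0) :
    (p : ℚ) ^ k - 1 ≠ 0 :=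
  sub_ne_zero.mpr (one_lt_pow₀ (by exact_mod_cast hp.one_lt) hk).ne'

theorem mul_eq_mul_of_sub_one_mul_eq_of_sq_sub_one_mul_eq {R : Type*} [CommRing R] [IsDomain R]
    [NeZero (2 : R)] {a b c d : R} (hab : (a - 1) * (b - 1) ≠ 0)
    (h₁ : (a - 1) * (b - 1) = (c - 1) * (d - 1))
    (h₂ : (a ^ 2 - 1) * (b ^ 2 - 1) = (c ^ 2 - 1) * (d ^ 2 - 1)) :
    a * b = c * d := by
  have hplus : (a + 1) * (b + 1) = (c + 1) * (d + 1) := by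
    refine mul_left_cancel₀ hab ?_
    calc (a - 1) * (b - 1) * ((a + 1) * (b + 1))
        = (a ^ 2 - 1) * (b ^ 2 - 1) := by ring
      _ = (c - 1) * (d - 1) * ((c + 1) * (d + 1)) := by rw [h₂]; ring
      _ = (a - 1) * (b - 1) * ((c + 1) * (d + 1)) := by rw [h₁]
  refine mul_left_cancel₀ (two_ne_zero (α := R)) ?_
  linear_combination h₁ + hplus

theorem stmt7 (p₁ p₂ q₁ q₂ : ℕ) (hp₁ : p₁.Prime) (hp₂ : p₂.Prime)
    (hq₁ : q₁.Prime) (hq₂ : q₂.Prime) (hp : p₁ ≠ p₂) (hq : q₁ ≠ q₂)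
    (h2 : J 2 (p₁ * p₂) = J 2 (q₁ * q₂)) (h4 : J 4 (p₁ * p₂) = J 4 (q₁ * q₂)) :
    p₁ * p₂ = q₁ * q₂ := by
  rw [J_mul_of_prime_of_ne 2 hp₁ hp₂ hp, J_mul_of_prime_of_ne 2 hq₁ hq₂ hq] at h2
  rw [J_mul_of_prime_of_ne 4 hp₁ hp₂ hp, J_mul_of_prime_of_ne 4 hq₁ hq₂ hq] at h4
  have hsq : (p₁ : ℚ) ^ 2 * (p₂ : ℚ) ^ 2 = (q₁ : ℚ) ^ 2 * (q₂ : ℚ) ^ 2 :=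
    mul_eq_mul_of_sub_one_mul_eq_of_sq_sub_one_mul_eq
      (mul_ne_zero (hp₁.cast_pow_sub_one_ne_zero two_ne_zero)
        (hp₂.cast_pow_sub_one_ne_zero two_ne_zero))
      h2 (by simpa only [← pow_mul] using h4)
  have hcast : ((p₁ * p₂ : ℕ) : ℚ) ^ 2 = ((q₁ * q₂ : ℕ) : ℚ) ^ 2 := by
    push_cast
    rw [mul_pow, mul_pow, hsq]
  exact Nat.pow_left_injective two_ne_zero (by exact_mod_cast hcast)
end

section
/- If m and n are positive integers with J_k(m) = J_k(n) for infinitely many positive integers k, then m = n. -/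
/-!
Every factor `1 - p⁻ᵏ` of `J k n / nᵏ` tends to `1` as `k → ∞`, so `J k n ≈ nᵏ`. Hence if `m < n`
then `J k m ≤ mᵏ = o(nᵏ)` is eventually smaller than `J k n`, and the two can agree for only
finitely many `k`.
-/

open Filter Topology

lemma J_le_pow (k n : ℕ) : J k n ≤ (n : ℚ) ^ k := by
  refine mul_le_of_le_one_right (by positivity) (Finset.prod_le_one (fun p _ => ?_) fun p _ => ?_)
  · rw [sub_nonneg]
    exact div_le_one_of_le₀ (one_le_pow₀ (mod_cast Nat.pos_of_mem_primeFactors ‹_›)) (by positivity)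
  · exact sub_le_self 1 (by positivity)

lemma tendsto_J_div_pow {n : ℕ} (hn : n ≠ 0) :
    Tendsto (fun k => J k n / (n : ℚ) ^ k) atTop (𝓝 1) := by
  have hfactor : ∀ p ∈ n.primeFactors,
      Tendsto (fun k => 1 - 1 / (p : ℚ) ^ k) atTop (𝓝 1) := by
    intro p hp
    have hp1 : (1 : ℚ) < p := mod_cast (Nat.prime_of_mem_primeFactors hp).one_lt
    have hpow : Tendsto (fun k => (1 / (p : ℚ)) ^ k) atTop (𝓝 0) :=
      tendsto_pow_atTop_nhds_zero_of_lt_one (by positivity) ((div_lt_one (by linarith)).2 hp1)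
    simpa [one_div_pow] using tendsto_const_nhds.sub hpow
  have hJ : ∀ k, J k n / (n : ℚ) ^ k = ∏ p ∈ n.primeFactors, (1 - 1 / (p : ℚ) ^ k) := fun k =>
    mul_div_cancel_left₀ _ (pow_ne_zero k (Nat.cast_ne_zero.2 hn))
  simpa only [hJ, Finset.prod_const_one] using tendsto_finsetProd _ hfactor

lemma eventually_J_lt_J {m n : ℕ} (hmn : m < n) : ∀ᶠ k in atTop, J k m < J k n := by
  have hn : (0 : ℚ) < n := mod_cast (Nat.zero_le m).trans_lt hmn
  have hratio : Tendsto (fun k => ((m : ℚ) / n) ^ k) atTop (𝓝 0) :=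
    tendsto_pow_atTop_nhds_zero_of_lt_one (by positivity) ((div_lt_one hn).2 (mod_cast hmn))
  have hgap : ∀ᶠ k in atTop, 0 < J k n / (n : ℚ) ^ k - ((m : ℚ) / n) ^ k := by
    refine ((tendsto_J_div_pow (by omega)).sub hratio).eventually (lt_mem_nhds ?_)
    norm_num
  filter_upwards [hgap] with k hk
  have hnk : (0 : ℚ) < (n : ℚ) ^ k := by positivity
  calc J k m ≤ (m : ℚ) ^ k := J_le_pow k m
    _ = ((m : ℚ) / n) ^ k * (n : ℚ) ^ k := by rw [div_pow, div_mul_cancel₀ _ hnk.ne']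
    _ < J k n / (n : ℚ) ^ k * (n : ℚ) ^ k := by gcongr; linarith
    _ = J k n := div_mul_cancel₀ _ hnk.ne'

theorem stmt8_general (m n : ℕ)
    (h : {k : ℕ | 0 < k ∧ J k m = J k n}.Infinite) : m = n := by
  have hfreq : ∃ᶠ k in atTop, J k m = J k n :=
    (Nat.frequently_atTop_iff_infinite.2 h).mono fun _ hk => hk.2
  rcases lt_trichotomy m n with hlt | heq | hgt
  · exact (hfreq ((eventually_J_lt_J hlt).mono fun _ => ne_of_lt)).elim
  · exact heq
  · exact (hfreq ((eventually_J_lt_J hgt).mono fun _ => ne_of_gt)).elim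

theorem stmt8 (m n : ℕ) (hm : 0 < m) (hn : 0 < n)
    (h : {k : ℕ | 0 < k ∧ J k m = J k n}.Infinite) : m = n :=
  stmt8_general m n h
end

section
/- If m, n are positive integers with J₂(m) = J₂(n), J₄(m) = J₄(n), and J₆(m) = J₆(n), then the 2-adic valuations of m and n are equal and the 3-adic valuations of m and n are equal. -/
/-!
With `c p = (p^(k+l) - 1)/(p^k - 1)`, the quotient `J_{k+l}(n)/J_k(n)` is the integer
`∏_{p ∣ n} p^(l(v_p(n) - 1)) c(p)`; for `(k, l) = (2, 4)` and `(2, 2)` these are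
`A(n) = ∏ p^(4v_p-4)(p⁴+p²+1)` and `B(n) = ∏ p^(2v_p-2)(p²+1)`, and the hypotheses give
`A(m) = A(n)`, `B(m) = B(n)`.

Since `p⁴+p²+1` is odd, `v₂(A(n)) = 4(v₂(n) - 1)` determines `v₂(n)` except that it cannot tell
`0` from `1`. Those are told apart modulo 8: every odd prime contributes a factor `≡ 3`, while an
exact power `2¹` contributes `21 ≡ 5`, so `χ₈'(A(n)) = (-1)^v₂(n)`. As `p²+1 ≡ 2 (mod 4)` for odd
`p`, `v₂(B(n))` then counts the odd prime factors, so `m` and `n` have equally many prime factors.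
Symmetrically `3 ∤ p²+1` gives `v₃(B(n)) = 2(v₃(n) - 1)`, and `v₃(p⁴+p²+1) = 1` for `p ≠ 3`
makes `v₃(A(n))` equal to `ω(n) - v₃(n)` when `v₃(n) ≤ 1`, which separates the remaining case.
-/

def jordanCofactor (l : ℕ) (c : ℕ → ℕ) (n : ℕ) : ℕ :=
  ∏ p ∈ n.primeFactors, p ^ (l * (n.factorization p - 1)) * c p

lemma J_eq_prod (k : ℕ) {n : ℕ} (hn : n ≠ 0) :
    J k n =
      ∏ p ∈ n.primeFactors, (p : ℚ) ^ (k * (n.factorization p - 1)) * ((p : ℚ) ^ k - 1) := by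
  rw [J]
  nth_rw 1 [Nat.prod_primeFactors_pow_factorization hn]
  rw [Nat.cast_prod, ← Finset.prod_pow, ← Finset.prod_mul_distrib]
  refine Finset.prod_congr rfl fun p hp => ?_
  have hp0 : (p : ℚ) ≠ 0 := by exact_mod_cast (Nat.prime_of_mem_primeFactors hp).ne_zero
  obtain ⟨w, hw⟩ : ∃ w, n.factorization p = w + 1 :=
    Nat.exists_eq_add_one.2 ((Nat.prime_of_mem_primeFactors hp).factorization_pos_of_dvd hn
      (Nat.dvd_of_mem_primeFactors hp))
  rw [hw, Nat.add_sub_cancel]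
  push_cast
  field_simp
  ring

lemma J_ne_zero {k n : ℕ} (hk : k ≠ 0) (hn : n ≠ 0) : J k n ≠ 0 := by
  rw [J_eq_prod k hn]
  refine Finset.prod_ne_zero_iff.2 fun p hp => mul_ne_zero ?_ ?_
  · exact pow_ne_zero _ (by exact_mod_cast (Nat.prime_of_mem_primeFactors hp).ne_zero)
  · have hp : (1 : ℚ) < p := by exact_mod_cast (Nat.prime_of_mem_primeFactors hp).one_lt
    exact sub_ne_zero.2 (one_lt_pow₀ hp hk).ne'

section Cofactor

variable {k l : ℕ} {c : ℕ → ℕ}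

lemma J_add_eq_jordanCofactor_mul
    (hc : ∀ p : ℕ, (c p : ℚ) * ((p : ℚ) ^ k - 1) = (p : ℚ) ^ (k + l) - 1)
    {n : ℕ} (hn : n ≠ 0) : J (k + l) n = jordanCofactor l c n * J k n := by
  rw [J_eq_prod _ hn, J_eq_prod _ hn, jordanCofactor, Nat.cast_prod, ← Finset.prod_mul_distrib]
  refine Finset.prod_congr rfl fun p _ => ?_
  rw [← hc p]
  push_cast
  ring

lemma jordanCofactor_eq_of_J_eq
    (hc : ∀ p : ℕ, (c p : ℚ) * ((p : ℚ) ^ k - 1) = (p : ℚ) ^ (k + l) - 1)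
    (hk : k ≠ 0) {m n : ℕ} (hm : m ≠ 0) (hn : n ≠ 0)
    (hJk : J k m = J k n) (hJkl : J (k + l) m = J (k + l) n) :
    jordanCofactor l c m = jordanCofactor l c n := by
  have h : (jordanCofactor l c m : ℚ) * J k m = jordanCofactor l c n * J k m := by
    rw [← J_add_eq_jordanCofactor_mul hc hm, hJkl, J_add_eq_jordanCofactor_mul hc hn, hJk]
  exact_mod_cast mul_right_cancel₀ (J_ne_zero hk hm) h

lemma factorization_jordanCofactor (hc : ∀ p : ℕ, p.Prime → c p ≠ 0) (n q : ℕ) :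
    (jordanCofactor l c n).factorization q =
      l * (n.factorization q - 1) + ∑ p ∈ n.primeFactors, (c p).factorization q := by
  have hterm : ∀ p ∈ n.primeFactors, (p ^ (l * (n.factorization p - 1)) * c p).factorization q =
      (if p = q then l * (n.factorization p - 1) else 0) + (c p).factorization q := by
    intro p hp
    have hp := Nat.prime_of_mem_primeFactors hp
    rw [Nat.factorization_mul (pow_ne_zero _ hp.ne_zero) (hc p hp), Finsupp.add_apply,
      Nat.factorization_pow, hp.factorization, Finsupp.smul_apply, Finsupp.single_apply]
    by_cases h : p = q <;> simp [h]
  rw [jordanCofactor, Nat.factorization_prod fun p hp =>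
      mul_ne_zero (pow_ne_zero _ (Nat.prime_of_mem_primeFactors hp).ne_zero)
        (hc p (Nat.prime_of_mem_primeFactors hp)),
    Finsupp.finsetSum_apply, Finset.sum_congr rfl hterm, Finset.sum_add_distrib,
    Finset.sum_ite_eq']
  split_ifs with hq
  · rfl
  · rw [Finsupp.notMem_support_iff.1 hq, Nat.zero_sub, mul_zero]

lemma factorization_jordanCofactor_of_not_dvd (hc : ∀ p : ℕ, p.Prime → c p ≠ 0) {q : ℕ}
    (hq : ∀ p : ℕ, ¬ q ∣ c p) (n : ℕ) :
    (jordanCofactor l c n).factorization q = l * (n.factorization q - 1) := by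
  rw [factorization_jordanCofactor hc,
    Finset.sum_eq_zero fun p _ => Nat.factorization_eq_zero_of_not_dvd (hq p), add_zero]

lemma factorization_jordanCofactor_of_eq_one (hc : ∀ p : ℕ, p.Prime → c p ≠ 0) {q : ℕ}
    (hqq : ¬ q ∣ c q) (hq : ∀ p : ℕ, p.Prime → p ≠ q → (c p).factorization q = 1) (n : ℕ) :
    (jordanCofactor l c n).factorization q =
      l * (n.factorization q - 1) + (n.primeFactors.erase q).card := by
  rw [factorization_jordanCofactor hc, ← Finset.sum_erase n.primeFactors
      (f := fun p => (c p).factorization q) (Nat.factorization_eq_zero_of_not_dvd hqq),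
    Finset.card_eq_sum_ones]
  exact congrArg _ <| Finset.sum_congr rfl fun p hp =>
    hq p (Nat.prime_of_mem_primeFactors (Finset.mem_of_mem_erase hp))
      (Finset.ne_of_mem_erase hp)

end Cofactor

lemma card_primeFactors_erase_add_min (n q : ℕ) :
    (n.primeFactors.erase q).card + min (n.factorization q) 1 = n.primeFactors.card := by
  by_cases hq : q ∈ n.primeFactors
  · have : n.factorization q ≠ 0 := Finsupp.mem_support_iff.1 hq
    rw [← Finset.card_erase_add_one hq]
    omega
  · rw [Finset.erase_eq_of_notMem hq, Finsupp.notMem_support_iff.1 hq]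
    rfl

lemma factorization_eq_one_of_dvd_of_not_dvd_sq {q x : ℕ} (hq : q.Prime) (h1 : q ∣ x)
    (h2 : ¬ q ^ 2 ∣ x) : x.factorization q = 1 := by
  have hx : x ≠ 0 := by rintro rfl; exact h2 (dvd_zero _)
  have := (hq.pow_dvd_iff_le_factorization hx (k := 1)).1 (by rwa [pow_one])
  have := (hq.pow_dvd_iff_le_factorization hx (k := 2)).not.1 h2
  omega

lemma not_two_dvd_pow_four_add_sq_add_one (p : ℕ) : ¬ 2 ∣ p ^ 4 + p ^ 2 + 1 := by
  rw [← ZMod.natCast_eq_zero_iff]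
  push_cast
  generalize (p : ZMod 2) = x
  revert x
  decide

lemma not_three_dvd_sq_add_one (p : ℕ) : ¬ 3 ∣ p ^ 2 + 1 := by
  rw [← ZMod.natCast_eq_zero_iff]
  push_cast
  generalize (p : ZMod 3) = x
  revert x
  decide

lemma factorization_sq_add_one_two {p : ℕ} (hp : Odd p) : (p ^ 2 + 1).factorization 2 = 1 := by
  obtain ⟨k, rfl⟩ := hp
  refine factorization_eq_one_of_dvd_of_not_dvd_sq Nat.prime_two ?_ ?_ <;>
    rw [← ZMod.natCast_eq_zero_iff] <;> push_cast
  · generalize (k : ZMod 2) = x; revert x; decide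
  · generalize (k : ZMod 4) = x; revert x; decide

lemma factorization_pow_four_add_sq_add_one_three {p : ℕ} (hp : ¬ 3 ∣ p) :
    (p ^ 4 + p ^ 2 + 1).factorization 3 = 1 := by
  obtain ⟨k, rfl | rfl⟩ : ∃ k, p = 3 * k + 1 ∨ p = 3 * k + 2 := ⟨p / 3, by omega⟩ <;>
    refine factorization_eq_one_of_dvd_of_not_dvd_sq Nat.prime_three ?_ ?_ <;>
    rw [← ZMod.natCast_eq_zero_iff] <;> push_cast
  all_goals first
    | generalize (k : ZMod 3) = x; revert x; decide
    | generalize (k : ZMod 9) = x; revert x; decide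

open ZMod in
lemma χ₈'_pow_four_mul_pow_four_add_sq_add_one {p : ℕ} (hp : Odd p) (e : ℕ) :
    χ₈' ((p ^ (4 * e) * (p ^ 4 + p ^ 2 + 1) : ℕ) : ZMod 8) = 1 := by
  obtain ⟨k, rfl⟩ := hp
  push_cast
  generalize (k : ZMod 8) = x
  have h : (2 * x + 1) ^ 4 = 1 := by revert x; decide
  rw [pow_mul, h, one_pow, one_mul]
  revert x
  decide

open ZMod in
lemma χ₈'_jordanCofactor {n : ℕ} (hn : n.factorization 2 ≤ 1) :
    χ₈' (jordanCofactor 4 (fun p => p ^ 4 + p ^ 2 + 1) n : ZMod 8) =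
      (-1) ^ n.factorization 2 := by
  have hχ : ∀ p ∈ n.primeFactors,
      χ₈' ((p ^ (4 * (n.factorization p - 1)) * (p ^ 4 + p ^ 2 + 1) : ℕ) : ZMod 8) =
        if p = 2 then -1 else 1 := by
    intro p hp
    split_ifs with h
    · subst h
      have : n.factorization 2 ≠ 0 := Finsupp.mem_support_iff.1 hp
      rw [show n.factorization 2 = 1 by omega]
      decide
    · exact χ₈'_pow_four_mul_pow_four_add_sq_add_one
        ((Nat.prime_of_mem_primeFactors hp).odd_of_ne_two h) _
  rw [jordanCofactor, Nat.cast_prod, map_prod, Finset.prod_congr rfl hχ, Finset.prod_ite_eq']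
  split_ifs with h
  · have : n.factorization 2 ≠ 0 := Finsupp.mem_support_iff.1 h
    rw [show n.factorization 2 = 1 by omega, pow_one]
  · rw [Finsupp.notMem_support_iff.1 h, pow_zero]

section Valuations

variable {m n : ℕ}

lemma factorization_two_eq_of_jordanCofactor_eq
    (hF : jordanCofactor 4 (fun p => p ^ 4 + p ^ 2 + 1) m =
      jordanCofactor 4 (fun p => p ^ 4 + p ^ 2 + 1) n) :
    m.factorization 2 = n.factorization 2 := by
  have hF2 := congrArg (·.factorization 2) hF
  simp only [factorization_jordanCofactor_of_not_dvd (fun _ _ => by positivity)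
    not_two_dvd_pow_four_add_sq_add_one] at hF2
  obtain h | ⟨hm, hn⟩ : m.factorization 2 = n.factorization 2 ∨
      (m.factorization 2 ≤ 1 ∧ n.factorization 2 ≤ 1) := by omega
  · exact h
  · have hχ := congrArg (fun x : ℕ => ZMod.χ₈' x) hF
    simp only [χ₈'_jordanCofactor hm, χ₈'_jordanCofactor hn] at hχ
    interval_cases m.factorization 2 <;> interval_cases n.factorization 2 <;> simp_all

lemma card_primeFactors_eq_of_jordanCofactor_eq (h2 : m.factorization 2 = n.factorization 2)
    (hG : jordanCofactor 2 (fun p => p ^ 2 + 1) m = jordanCofactor 2 (fun p => p ^ 2 + 1) n) :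
    m.primeFactors.card = n.primeFactors.card := by
  have hG2 := congrArg (·.factorization 2) hG
  simp only [factorization_jordanCofactor_of_eq_one (fun _ _ => by positivity) (by norm_num)
    fun p hp h => factorization_sq_add_one_two (hp.odd_of_ne_two h)] at hG2
  have := card_primeFactors_erase_add_min m 2
  have := card_primeFactors_erase_add_min n 2
  omega

lemma factorization_three_eq_of_jordanCofactor_eq
    (hω : m.primeFactors.card = n.primeFactors.card)
    (hF : jordanCofactor 4 (fun p => p ^ 4 + p ^ 2 + 1) m =
      jordanCofactor 4 (fun p => p ^ 4 + p ^ 2 + 1) n)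
    (hG : jordanCofactor 2 (fun p => p ^ 2 + 1) m = jordanCofactor 2 (fun p => p ^ 2 + 1) n) :
    m.factorization 3 = n.factorization 3 := by
  have hF3 := congrArg (·.factorization 3) hF
  have hG3 := congrArg (·.factorization 3) hG
  simp only [factorization_jordanCofactor_of_not_dvd (fun _ _ => by positivity)
      not_three_dvd_sq_add_one,
    factorization_jordanCofactor_of_eq_one (fun _ _ => by positivity) (by norm_num)
      fun p hp h => factorization_pow_four_add_sq_add_one_three
        ((Nat.prime_dvd_prime_iff_eq Nat.prime_three hp).not.2 (Ne.symm h))] at hF3 hG3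
  have := card_primeFactors_erase_add_min m 3
  have := card_primeFactors_erase_add_min n 3
  omega

end Valuations

theorem stmt9 (m n : ℕ) (hm : 0 < m) (hn : 0 < n)
    (h2 : J 2 m = J 2 n) (h4 : J 4 m = J 4 n) (h6 : J 6 m = J 6 n) :
    m.factorization 2 = n.factorization 2 ∧ m.factorization 3 = n.factorization 3 := by
  have hF : jordanCofactor 4 (fun p => p ^ 4 + p ^ 2 + 1) m =
      jordanCofactor 4 (fun p => p ^ 4 + p ^ 2 + 1) n :=
    jordanCofactor_eq_of_J_eq (k := 2) (fun p => by push_cast; ring) two_ne_zero hm.ne' hn.ne' h2 h6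
  have hG : jordanCofactor 2 (fun p => p ^ 2 + 1) m = jordanCofactor 2 (fun p => p ^ 2 + 1) n :=
    jordanCofactor_eq_of_J_eq (k := 2) (fun p => by push_cast; ring) two_ne_zero hm.ne' hn.ne' h2 h4
  have hv2 := factorization_two_eq_of_jordanCofactor_eq hF
  exact ⟨hv2, factorization_three_eq_of_jordanCofactor_eq
    (card_primeFactors_eq_of_jordanCofactor_eq hv2 hG) hF hG⟩
end

section
/- The function c(n) = (n² − 1)(n² + 6)/60 satisfies, for all integers n ≥ 2: c(2n+1) = (n³(n+2)/(2n+1))·(3c(n) + c(n+2)) − ((n−1)(n+1)³/(2n+1))·(c(n−1) + 3c(n+1)), and for all n ≥ 3: c(2n) = ((n−1)²(n+2)/4)·(2c(n−1) + c(n) + c(n+2) − c(2)) − ((n−2)(n+1)²/4)·(c(n−2) + c(n) + 2c(n+1) − c(2)). -/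
noncomputable def c : ℕ → ℚ := fun n => ((n : ℚ) ^ 2 - 1) * ((n : ℚ) ^ 2 + 6) / 60

/-! Both recurrences are identities of rational functions once `c` is read as the polynomial
`(x² − 1)(x² + 6)/60` evaluated at `x = n`. -/

section Polynomial

variable {K : Type*} [Field K] [CharZero K]

def cPoly (x : K) : K := (x ^ 2 - 1) * (x ^ 2 + 6) / 60

theorem cPoly_two_mul_add_one (x : K) (hx : 2 * x + 1 ≠ 0) :
    cPoly (2 * x + 1) = (x ^ 3 * (x + 2) / (2 * x + 1)) * (3 * cPoly x + cPoly (x + 2))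
      - ((x - 1) * (x + 1) ^ 3 / (2 * x + 1)) * (cPoly (x - 1) + 3 * cPoly (x + 1)) := by
  unfold cPoly
  field_simp
  ring

theorem cPoly_two_mul (x : K) :
    cPoly (2 * x) = ((x - 1) ^ 2 * (x + 2) / 4) *
        (2 * cPoly (x - 1) + cPoly x + cPoly (x + 2) - cPoly 2)
      - ((x - 2) * (x + 1) ^ 2 / 4) * (cPoly (x - 2) + cPoly x + 2 * cPoly (x + 1) - cPoly 2) := by
  unfold cPoly
  field_simp
  ring

end Polynomial

theorem c_eq_cPoly (n : ℕ) : c n = cPoly (n : ℚ) := rfl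

theorem c_sub_eq_cPoly {n k : ℕ} (h : k ≤ n) : c (n - k) = cPoly ((n : ℚ) - k) := by
  rw [c_eq_cPoly, Nat.cast_sub h]

theorem stmt14 :
    (∀ n : ℕ, 2 ≤ n →
      c (2 * n + 1) = ((n : ℚ) ^ 3 * (n + 2) / (2 * n + 1)) * (3 * c n + c (n + 2))
        - (((n : ℚ) - 1) * ((n : ℚ) + 1) ^ 3 / (2 * n + 1)) * (c (n - 1) + 3 * c (n + 1))) ∧
    (∀ n : ℕ, 3 ≤ n →
      c (2 * n) = (((n : ℚ) - 1) ^ 2 * ((n : ℚ) + 2) / 4) * (2 * c (n - 1) + c n + c (n + 2) - c 2)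
        - (((n : ℚ) - 2) * ((n : ℚ) + 1) ^ 2 / 4) * (c (n - 2) + c n + 2 * c (n + 1) - c 2)) := by
  constructor
  · intro n hn
    rw [c_sub_eq_cPoly (by omega : 1 ≤ n)]
    simp only [c_eq_cPoly, Nat.cast_add, Nat.cast_mul, Nat.cast_ofNat, Nat.cast_one]
    exact cPoly_two_mul_add_one _ (by positivity)
  · intro n hn
    rw [c_sub_eq_cPoly (by omega : 1 ≤ n), c_sub_eq_cPoly (by omega : 2 ≤ n)]
    simp only [c_eq_cPoly, Nat.cast_add, Nat.cast_mul, Nat.cast_ofNat, Nat.cast_one]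
    exact cPoly_two_mul _
end
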